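/- arXiv:2401.17248 — 3 statements merged into one kernel-verified Lean document; each statement's English description precedes it below -/
import Mathlib

section
/- Let A be a positive self-adjoint operator with eigenvalues λ_k ≥ c·k (c>0), let p = 1/4 + ε with ε > 0, and suppose G ∈ L(H) satisfies A^p G ∈ L(H). Then for every α with 0 ≤ α < min(p, 1/2), the integral ∫₀¹ t^{-2α} ‖e^{-tA} G‖²_{HS} dt is finite. -/
/-!
Since `K = A^p G` coordinatewise, the `j`-th row of `e^{-tA} G` is `e^{-tλ_j} λ_j^{-p}` times the
`j`-th row of `K`, whose squared `ℓ²` norm is `‖K* e_j‖² ≤ ‖K‖²` by Parseval. Hence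
`‖e^{-tA} G‖²_HS ≤ ‖K‖² Σ_j λ_j^{-2p} e^{-2tλ_j}`. Integrating `t^{-2α}` times the `j`-th term over
`(0, 1]` is bounded by the Gamma integral over `(0, ∞)`, namely `Γ(1-2α) (2λ_j)^{2α-1} λ_j^{-2p}`
(finite as `α < 1/2`), and `Σ_j λ_j^{2α-1-2p}` converges because `λ_j ≥ c (j+1)` and `α < p`.
-/

open MeasureTheory Real Set
open scoped ENNReal

section HilbertSchmidt

variable {ι H : Type*} [NormedAddCommGroup H] [InnerProductSpace ℝ H]

theorem HilbertBasis.tsum_ofReal_repr_sq (b : HilbertBasis ι ℝ H) (x : H) :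
    ∑' k, ENNReal.ofReal (b.repr x k ^ 2) = ENNReal.ofReal (‖x‖ ^ 2) := by
  have h : HasSum (fun k => b.repr x k ^ 2) (‖x‖ ^ 2) := by
    simpa [b.repr_apply_apply, real_inner_comm, ← sq] using b.hasSum_inner_mul_inner x x
  rw [← h.tsum_eq, ENNReal.ofReal_tsum_of_nonneg (fun _ => sq_nonneg _) h.summable]

theorem HilbertBasis.tsum_ofReal_repr_apply_sq_le [CompleteSpace H] (b : HilbertBasis ι ℝ H)
    (T : H →L[ℝ] H) (j : ι) :
    ∑' k, ENNReal.ofReal (b.repr (T (b k)) j ^ 2) ≤ ENNReal.ofReal (‖T‖ ^ 2) := by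
  have hrow : ∀ k, b.repr (T (b k)) j = b.repr (T.adjoint (b j)) k := fun k => by
    rw [b.repr_apply_apply, b.repr_apply_apply, ContinuousLinearMap.adjoint_inner_right,
      real_inner_comm]
  simp only [hrow, b.tsum_ofReal_repr_sq]
  gcongr
  calc ‖T.adjoint (b j)‖ ≤ ‖T.adjoint‖ * ‖b j‖ := T.adjoint.le_opNorm _
    _ = ‖T‖ := by rw [b.orthonormal.1 j, mul_one, ContinuousLinearMap.adjoint.norm_map]

theorem HilbertBasis.tsum_tsum_ofReal_mul_repr_sq_le [CompleteSpace H] (b : HilbertBasis ι ℝ H)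
    {G K : H →L[ℝ] H} {w : ι → ℝ} (hw : ∀ j, w j ≠ 0)
    (hK : ∀ x j, b.repr (K x) j = w j * b.repr (G x) j) (d : ι → ℝ) :
    ∑' k, ∑' j, ENNReal.ofReal ((d j * b.repr (G (b k)) j) ^ 2)
      ≤ ENNReal.ofReal (‖K‖ ^ 2) * ∑' j, ENNReal.ofReal ((d j / w j) ^ 2) := by
  have hGK : ∀ k j, (d j * b.repr (G (b k)) j) ^ 2
      = (d j / w j) ^ 2 * b.repr (K (b k)) j ^ 2 := fun k j => by
    rw [hK]; field_simp [hw j]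
  calc ∑' k, ∑' j, ENNReal.ofReal ((d j * b.repr (G (b k)) j) ^ 2)
      = ∑' j, ENNReal.ofReal ((d j / w j) ^ 2) *
          ∑' k, ENNReal.ofReal (b.repr (K (b k)) j ^ 2) := by
        rw [ENNReal.tsum_comm]
        simp only [hGK, ENNReal.ofReal_mul (sq_nonneg _), ENNReal.tsum_mul_left]
    _ ≤ ∑' j, ENNReal.ofReal ((d j / w j) ^ 2) * ENNReal.ofReal (‖K‖ ^ 2) := by
        gcongr with j
        exact b.tsum_ofReal_repr_apply_sq_le K j
    _ = ENNReal.ofReal (‖K‖ ^ 2) * ∑' j, ENNReal.ofReal ((d j / w j) ^ 2) := by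
        rw [ENNReal.tsum_mul_right, mul_comm]

end HilbertSchmidt

theorem lintegral_Ioc_rpow_mul_exp_neg_mul_le {a r : ℝ} (ha : 0 < a) (hr : 0 < r) :
    ∫⁻ t in Ioc 0 1, ENNReal.ofReal (t ^ (a - 1) * exp (-(r * t)))
      ≤ ENNReal.ofReal ((1 / r) ^ a * Gamma a) := by
  have hint : IntegrableOn (fun t : ℝ => t ^ (a - 1) * exp (-(r * t))) (Ioi 0) := by
    simpa [neg_mul] using
      integrableOn_rpow_mul_exp_neg_mul_rpow (p := 1) (by linarith : -1 < a - 1) one_pos hr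
  calc ∫⁻ t in Ioc 0 1, ENNReal.ofReal (t ^ (a - 1) * exp (-(r * t)))
      ≤ ∫⁻ t in Ioi 0, ENNReal.ofReal (t ^ (a - 1) * exp (-(r * t))) :=
        lintegral_mono_set Ioc_subset_Ioi_self
    _ = ENNReal.ofReal ((1 / r) ^ a * Gamma a) := by
        rw [← integral_rpow_mul_exp_neg_mul_Ioi ha hr, ofReal_integral_eq_lintegral_ofReal hint]
        filter_upwards [ae_restrict_mem measurableSet_Ioi] with t (ht : 0 < t)
        positivity

theorem tsum_ofReal_rpow_neg_lt_top {lam : ℕ → ℝ} {c q : ℝ} (hc : 0 < c)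
    (hlam : ∀ k : ℕ, c * (k + 1) ≤ lam k) (hq : 1 < q) :
    ∑' k, ENNReal.ofReal (lam k ^ (-q)) < ⊤ := by
  have hsum : Summable fun k : ℕ => c ^ (-q) * ((k : ℝ) + 1) ^ (-q) := by
    refine Summable.mul_left _ ?_
    simpa using (summable_nat_add_iff 1).mpr (Real.summable_nat_rpow.mpr (by linarith))
  calc ∑' k, ENNReal.ofReal (lam k ^ (-q))
      ≤ ∑' k : ℕ, ENNReal.ofReal (c ^ (-q) * ((k : ℝ) + 1) ^ (-q)) := by
        gcongr with k
        rw [← Real.mul_rpow hc.le (by positivity)]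
        exact Real.rpow_le_rpow_of_nonpos (by positivity) (hlam k) (by linarith)
    _ = ENNReal.ofReal (∑' k : ℕ, c ^ (-q) * ((k : ℝ) + 1) ^ (-q)) :=
        (ENNReal.ofReal_tsum_of_nonneg (fun k => by positivity) hsum).symm
    _ < ⊤ := ENNReal.ofReal_lt_top

theorem lintegral_Ioc_rpow_mul_exp_div_rpow_sq_le {α p l : ℝ} (hα : α < 1 / 2) (hl : 0 < l) :
    ∫⁻ t in Ioc 0 1, ENNReal.ofReal (t ^ (-(2 * α))) *
        ENNReal.ofReal ((exp (-t * l) / l ^ p) ^ 2)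
      ≤ ENNReal.ofReal ((1 / 2) ^ (1 - 2 * α) * Gamma (1 - 2 * α)) *
          ENNReal.ofReal (l ^ (-(1 + 2 * p - 2 * α))) := by
  have hsplit : ∀ t : ℝ, t ^ (-(2 * α)) * (exp (-t * l) / l ^ p) ^ 2
      = l ^ (-(2 * p)) * (t ^ ((1 - 2 * α) - 1) * exp (-(2 * l * t))) := fun t => by
    rw [show (1 - 2 * α) - 1 = -(2 * α) by ring, div_pow, ← exp_nat_mul, ← rpow_natCast,
      ← rpow_mul hl.le, rpow_neg hl.le]
    push_cast
    field_simp
  calc ∫⁻ t in Ioc 0 1, ENNReal.ofReal (t ^ (-(2 * α))) *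
        ENNReal.ofReal ((exp (-t * l) / l ^ p) ^ 2)
      = ENNReal.ofReal (l ^ (-(2 * p))) *
          ∫⁻ t in Ioc 0 1, ENNReal.ofReal (t ^ ((1 - 2 * α) - 1) * exp (-(2 * l * t))) := by
        simp only [← ENNReal.ofReal_mul' (sq_nonneg _), hsplit,
          ENNReal.ofReal_mul (rpow_nonneg hl.le _)]
        exact lintegral_const_mul' _ _ ENNReal.ofReal_ne_top
    _ ≤ ENNReal.ofReal (l ^ (-(2 * p))) *
          ENNReal.ofReal ((1 / (2 * l)) ^ (1 - 2 * α) * Gamma (1 - 2 * α)) := by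
        gcongr
        exact lintegral_Ioc_rpow_mul_exp_neg_mul_le (by linarith) (by positivity)
    _ = ENNReal.ofReal ((1 / 2) ^ (1 - 2 * α) * Gamma (1 - 2 * α)) *
          ENNReal.ofReal (l ^ (-(1 + 2 * p - 2 * α))) := by
        rw [← ENNReal.ofReal_mul (rpow_nonneg hl.le _),
          ← ENNReal.ofReal_mul (mul_nonneg (by positivity) (Gamma_pos_of_pos (by linarith)).le)]
        congr 1
        simp only [one_div]
        rw [mul_inv, mul_rpow (by norm_num) (inv_nonneg.mpr hl.le), inv_rpow hl.le,
          ← rpow_neg hl.le, show -(1 + 2 * p - 2 * α) = -(2 * p) + -(1 - 2 * α) by ring,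
          rpow_add hl]
        ring

theorem stmt4_general {H : Type*} [NormedAddCommGroup H] [InnerProductSpace ℝ H] [CompleteSpace H]
    (b : HilbertBasis ℕ ℝ H) (lam : ℕ → ℝ) (c : ℝ) (hc : 0 < c)
    (hlam : ∀ k : ℕ, c * (k + 1) ≤ lam k)
    (p : ℝ)
    (G K : H →L[ℝ] H)
    (hK : ∀ x k, b.repr (K x) k = lam k ^ p * b.repr (G x) k)
    (α : ℝ) (hα : α < min p (1/2)) :
    ∫⁻ t in Set.Ioc (0:ℝ) 1,
        ENNReal.ofReal (t ^ (-(2*α))) *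
          ∑' k : ℕ, ∑' j : ℕ,
            ENNReal.ofReal ((Real.exp (-t * lam j) * b.repr (G (b k)) j) ^ 2) < ⊤ := by
  have hlam0 : ∀ j, 0 < lam j := fun j => (by positivity : 0 < c * (j + 1)).trans_le (hlam j)
  have hαp : α < p := hα.trans_le (min_le_left _ _)
  have hα2 : α < 1 / 2 := hα.trans_le (min_le_right _ _)
  set f : ℕ → ℝ → ℝ≥0∞ := fun j t =>
    ENNReal.ofReal (t ^ (-(2 * α))) * ENNReal.ofReal ((exp (-t * lam j) / lam j ^ p) ^ 2)
  calc ∫⁻ t in Ioc 0 1, ENNReal.ofReal (t ^ (-(2 * α))) *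
        ∑' k, ∑' j, ENNReal.ofReal ((exp (-t * lam j) * b.repr (G (b k)) j) ^ 2)
      ≤ ∫⁻ t in Ioc 0 1, ENNReal.ofReal (‖K‖ ^ 2) * ∑' j, f j t := by
        refine lintegral_mono fun t => ?_
        rw [ENNReal.tsum_mul_left, mul_left_comm]
        gcongr
        exact b.tsum_tsum_ofReal_mul_repr_sq_le (fun j => (rpow_pos_of_pos (hlam0 j) p).ne') hK
          (fun j => exp (-t * lam j))
    _ = ENNReal.ofReal (‖K‖ ^ 2) * ∑' j, ∫⁻ t in Ioc 0 1, f j t := by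
        rw [lintegral_const_mul' _ _ ENNReal.ofReal_ne_top,
          lintegral_tsum fun j => by fun_prop]
    _ ≤ ENNReal.ofReal (‖K‖ ^ 2) * ∑' j,
          ENNReal.ofReal ((1 / 2) ^ (1 - 2 * α) * Gamma (1 - 2 * α)) *
            ENNReal.ofReal (lam j ^ (-(1 + 2 * p - 2 * α))) := by
        gcongr with j
        exact lintegral_Ioc_rpow_mul_exp_div_rpow_sq_le hα2 (hlam0 j)
    _ < ⊤ := by
        rw [ENNReal.tsum_mul_left]
        refine ENNReal.mul_lt_top ENNReal.ofReal_lt_top <|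
          ENNReal.mul_lt_top ENNReal.ofReal_lt_top ?_
        exact tsum_ofReal_rpow_neg_lt_top hc hlam (by linarith)

/-- If `lam k ≥ c(k+1)` with `c > 0`, `p = 1/4 + ε` with `ε > 0`, and
`A^p G` is bounded (encoded by the bounded operator `K` with
`(K x)_k = lam_k^p (G x)_k` spectrally), then for `0 ≤ α < min(p, 1/2)` the
integral `∫₀¹ t^{-2α} ‖e^{-tA}G‖²_{HS} dt` is finite, where the squared
Hilbert–Schmidt norm is `Σ_k Σ_j (e^{-t lam_j} (G e_k)_j)²`. -/
theorem stmt4 {H : Type*} [NormedAddCommGroup H] [InnerProductSpace ℝ H] [CompleteSpace H]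
    (b : HilbertBasis ℕ ℝ H) (lam : ℕ → ℝ) (c : ℝ) (hc : 0 < c)
    (hlam : ∀ k : ℕ, c * (k + 1) ≤ lam k)
    (ε p : ℝ) (hε : 0 < ε) (hp : p = 1/4 + ε)
    (G K : H →L[ℝ] H)
    (hK : ∀ x k, b.repr (K x) k = lam k ^ p * b.repr (G x) k)
    (α : ℝ) (hα0 : 0 ≤ α) (hα : α < min p (1/2)) :
    ∫⁻ t in Set.Ioc (0:ℝ) 1,
        ENNReal.ofReal (t ^ (-(2*α))) *
          ∑' k : ℕ, ∑' j : ℕ,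
            ENNReal.ofReal ((Real.exp (-t * lam j) * b.repr (G (b k)) j) ^ 2) < ⊤ :=
  stmt4_general b lam c hc hlam p G K hK α hα
end

section
/- Let {P_t} be a Markov semigroup on a Hilbert space H and let E ⊂ H be a densely and continuously embedded Banach space with α > 0 (E = D(A^α)). Suppose P is irreducible on E (for all t > 0, x ∈ E and nonempty open U ⊂ E, P_t^*δ_x(U) > 0) and satisfies the (SF) property on E ↪ H (for t > 0, φ ∈ B_b(E), P_tφ(x_n) → P_tφ(x) whenever x_n is bounded in E and x_n → x in H). Then the transition probabilities P_t^*δ_x, for t > 0 and x ∈ E, are mutually equivalent measures on the Borel σ-algebra of E. -/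
open MeasureTheory Filter Topology

/-!
Fix `0 < r < min s t`. By Chapman–Kolmogorov, `μ s y U = ∫⁻ z, μ r z U ∂μ (s - r) y`,
so a `μ s y`-null set `U` has `μ r z U = 0` for `μ (s - r) y`-a.e. `z`. The (SF) property makes
`z ↦ μ r z U` continuous on `E`, and irreducibility says `μ (s - r) y` charges every nonempty
open set, so `μ r z U = 0` for every `z`. Chapman–Kolmogorov at `x` and time `t` then gives
`μ t x U = 0`.
-/

theorem continuous_of_tendsto_comp_of_bounded {E H Y : Type*} [SeminormedAddCommGroup E]
    [TopologicalSpace H] [TopologicalSpace Y] {j : E → H} (hj : Continuous j) {f : E → Y}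
    (hf : ∀ x : E, ∀ xs : ℕ → E, (∃ R, ∀ n, ‖xs n‖ ≤ R) →
      Tendsto (fun n => j (xs n)) atTop (𝓝 (j x)) →
      Tendsto (fun n => f (xs n)) atTop (𝓝 (f x))) :
    Continuous f := by
  rw [continuous_iff_seqContinuous]
  intro xs x hxs
  obtain ⟨R, hR⟩ := hxs.norm.bddAbove_range
  exact hf x xs ⟨R, fun n => hR ⟨n, rfl⟩⟩ ((hj.tendsto x).comp hxs)

theorem measure_apply_eq_zero_of_lintegral_eq_zero {X Y : Type*} [TopologicalSpace X]
    [MeasurableSpace X] [MeasurableSpace Y] {ν : Measure X} [ν.IsOpenPosMeasure]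
    {κ : X → Measure Y} [∀ z, IsFiniteMeasure (κ z)] {U : Set Y}
    (hmeas : Measurable fun z => κ z U) (hcont : Continuous fun z => (κ z).real U)
    (h : ∫⁻ z, κ z U ∂ν = 0) (z : X) : κ z U = 0 := by
  have hae : (fun z => (κ z).real U) =ᵐ[ν] 0 :=
    ((lintegral_eq_zero_iff hmeas).1 h).mono fun z hz => by simp [measureReal_def, hz]
  have hzero := (hcont.ae_eq_iff_eq ν continuous_const).1 hae
  exact (measureReal_eq_zero_iff (measure_ne_top _ _)).1 (congrFun hzero z)

theorem stmt7_general {E H : Type*} [NormedAddCommGroup E] [NormedSpace ℝ E]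
    [NormedAddCommGroup H] [NormedSpace ℝ H]
    [MeasurableSpace E] [BorelSpace E]
    (j : E →L[ℝ] H)
    (μ : ℝ → E → Measure E)
    (hprob : ∀ t x, IsProbabilityMeasure (μ t x))
    (hmeas : ∀ t : ℝ, ∀ U : Set E, MeasurableSet U → Measurable fun y => μ t y U)
    (hCK : ∀ x : E, ∀ t h : ℝ, 0 < h → h < t → ∀ U : Set E, MeasurableSet U →
      μ t x U = ∫⁻ y, μ (t - h) y U ∂(μ h x))
    (hirr : ∀ t : ℝ, 0 < t → ∀ x : E, ∀ U : Set E, IsOpen U → U.Nonempty →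
      0 < μ t x U)
    (hSF : ∀ t : ℝ, 0 < t → ∀ φ : E → ℝ, Measurable φ → (∃ M, ∀ z, |φ z| ≤ M) →
      ∀ x : E, ∀ xs : ℕ → E, (∃ R, ∀ n, ‖xs n‖ ≤ R) →
      Tendsto (fun n => j (xs n)) atTop (nhds (j x)) →
      Tendsto (fun n => ∫ z, φ z ∂(μ t (xs n))) atTop (nhds (∫ z, φ z ∂(μ t x)))) :
    ∀ t s : ℝ, 0 < t → 0 < s → ∀ x y : E, μ t x ≪ μ s y := by
  intro t s ht hs x y
  obtain ⟨r, hr, hrs, hrt⟩ : ∃ r, 0 < r ∧ r < s ∧ r < t :=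
    ⟨min s t / 2, by positivity, by linarith [min_le_left s t], by linarith [min_le_right s t]⟩
  have hCK_r : ∀ x t, r < t → ∀ U, MeasurableSet U →
      μ t x U = ∫⁻ z, μ r z U ∂(μ (t - r) x) := fun x t hrt U hU => by
    simpa only [sub_sub_cancel] using hCK x t (t - r) (by linarith) (by linarith) U hU
  have : (μ (s - r) y).IsOpenPosMeasure :=
    ⟨fun U hU hne => (hirr _ (by linarith) y U hU hne).ne'⟩
  refine Measure.AbsolutelyContinuous.mk fun U hU hyU => ?_
  have hfeller : Continuous fun z => (μ r z).real U := by
    simp only [← integral_indicator_one hU]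
    refine continuous_of_tendsto_comp_of_bounded j.continuous (hSF r hr _ ?_ ⟨1, fun z => ?_⟩)
    · exact measurable_one.indicator hU
    · by_cases hz : z ∈ U <;> simp [hz]
  have hzero := measure_apply_eq_zero_of_lintegral_eq_zero (hmeas r U hU) hfeller
    ((hCK_r y s hrs U hU).symm.trans hyU)
  simp [hCK_r x t hrt U hU, hzero]

/-- If a Markov semigroup (encoded by its transition probabilities
`μ t x = P_t^* δ_x`, satisfying the Chapman–Kolmogorov identity) on the densely
and continuously embedded space `E = D(A^α) ↪ H` is irreducible on `E` and
enjoys the (SF) property on `E ↪ H`, then the transition probabilities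
`P_t^* δ_x`, `t > 0`, `x ∈ E`, are mutually equivalent on the Borel σ-algebra
of `E`. -/
theorem stmt7 {E H : Type*} [NormedAddCommGroup E] [NormedSpace ℝ E]
    [NormedAddCommGroup H] [NormedSpace ℝ H]
    [MeasurableSpace E] [BorelSpace E]
    (j : E →L[ℝ] H) (hinj : Function.Injective j) (hdense : DenseRange j)
    (μ : ℝ → E → Measure E)
    (hprob : ∀ t x, IsProbabilityMeasure (μ t x))
    (hmeas : ∀ t : ℝ, ∀ U : Set E, MeasurableSet U → Measurable fun y => μ t y U)
    (hCK : ∀ x : E, ∀ t h : ℝ, 0 < h → h < t → ∀ U : Set E, MeasurableSet U →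
      μ t x U = ∫⁻ y, μ (t - h) y U ∂(μ h x))
    (hirr : ∀ t : ℝ, 0 < t → ∀ x : E, ∀ U : Set E, IsOpen U → U.Nonempty →
      0 < μ t x U)
    (hSF : ∀ t : ℝ, 0 < t → ∀ φ : E → ℝ, Measurable φ → (∃ M, ∀ z, |φ z| ≤ M) →
      ∀ x : E, ∀ xs : ℕ → E, (∃ R, ∀ n, ‖xs n‖ ≤ R) →
      Tendsto (fun n => j (xs n)) atTop (nhds (j x)) →
      Tendsto (fun n => ∫ z, φ z ∂(μ t (xs n))) atTop (nhds (∫ z, φ z ∂(μ t x)))) :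
    ∀ t s : ℝ, 0 < t → 0 < s → ∀ x y : E, μ t x ≪ μ s y :=
  stmt7_general j μ hprob hmeas hCK hirr hSF
end

section
/- Markov gluing for path regularity: let X^x be a Markov family of H-valued processes with a.s. continuous paths, pathwise unique, and suppose that for initial data in D(A^γ) the paths lie a.s. in C([0,∞); D(A^γ)). If for x ∈ H the path t ↦ X_t^x lies in L²(0,T; D(A^γ)) a.s. for all T, then for every 0 < t₀ < T the path lies a.s. in C([t₀,T]; D(A^γ)). -/
/-! By Fubini, membership in `L²(0, t₀; D(A^γ))` puts `X^x_t` in `D(A^γ)` almost surely for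
almost every `t < t₀`, so there is a fixed time `t₁ ∈ (0, t₀)` with `X^x_{t₁} ∈ D(A^γ)` a.s.
Restarting at `t₁`, the path after `t₁` is a solution with regular initial datum, hence continuous
in `D(A^γ)` on `[t₁, ∞) ⊇ [t₀, T]`. -/

open MeasureTheory Set

def LiftsContinuouslyOn {E H : Type*} [TopologicalSpace E] (j : E → H) (s : Set ℝ)
    (f : ℝ → H) : Prop :=
  ∃ u : ℝ → E, ContinuousOn u s ∧ ∀ t ∈ s, f t = j (u t)

namespace LiftsContinuouslyOn

variable {E H : Type*} [TopologicalSpace E] {j : E → H} {s : Set ℝ} {f : ℝ → H}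

theorem mono {s' : Set ℝ} (hf : LiftsContinuouslyOn j s f) (hs : s' ⊆ s) :
    LiftsContinuouslyOn j s' f := by
  obtain ⟨u, hu, hfu⟩ := hf
  exact ⟨u, hu.mono hs, fun t ht => hfu t (hs ht)⟩

theorem of_comp_const_add {t₁ : ℝ} (hf : LiftsContinuouslyOn j (Ici 0) fun t => f (t₁ + t)) :
    LiftsContinuouslyOn j (Ici t₁) f := by
  obtain ⟨u, hu, hfu⟩ := hf
  have hshift : MapsTo (fun t => t - t₁) (Ici t₁) (Ici 0) := fun t ht =>
    mem_Ici.mpr (sub_nonneg.mpr ht)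
  refine ⟨fun t => u (t - t₁), hu.comp (by fun_prop) hshift, fun t ht => ?_⟩
  simpa using hfu (t - t₁) (hshift ht)

end LiftsContinuouslyOn

theorem exists_mem_Ioo_ae_of_ae_ae {Ω : Type*} [MeasurableSpace Ω] {P : Measure Ω} [SFinite P]
    {S : Set (ℝ × Ω)} (hS : MeasurableSet S) {a b : ℝ} (hab : a < b)
    (h : ∀ᵐ ω ∂P, ∀ᵐ t ∂volume.restrict (Ioo a b), (t, ω) ∈ S) :
    ∃ t ∈ Ioo a b, ∀ᵐ ω ∂P, (t, ω) ∈ S := by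
  have hswap : ∀ᵐ t ∂volume.restrict (Ioo a b), ∀ᵐ ω ∂P, (t, ω) ∈ S :=
    (Measure.ae_ae_comm (p := fun ω t => (t, ω) ∈ S) (measurable_swap hS)).mp h
  have : (ae (volume.restrict (Ioo a b))).NeBot := by
    rw [ae_neBot, Ne, Measure.restrict_eq_zero, Real.volume_Ioo]
    simpa using hab
  exact ((ae_restrict_mem measurableSet_Ioo).and hswap).exists

theorem stmt19_general {H E Ω : Type*} [NormedAddCommGroup H] [NormedSpace ℝ H]
    [MeasurableSpace H]
    [NormedAddCommGroup E] [NormedSpace ℝ E]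
    [MeasurableSpace Ω]
    (P : Measure Ω) [IsProbabilityMeasure P]
    (j : E →L[ℝ] H)
    (hrangemeas : MeasurableSet (Set.range j))
    (X : H → ℝ → Ω → H)
    (hjointmeas : ∀ x : H, Measurable fun p : ℝ × Ω => X x p.1 p.2)
    (hreg : ∀ y : E, ∀ᵐ ω ∂P, ∃ u : ℝ → E,
      ContinuousOn u (Set.Ici 0) ∧ ∀ t : ℝ, 0 ≤ t → X (j y) t ω = j (u t))
    (hL2 : ∀ x : H, ∀ T : ℝ, 0 < T → ∀ᵐ ω ∂P, ∃ u : ℝ → E,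
      (∀ᵐ t ∂(volume.restrict (Set.Ioo (0:ℝ) T)), X x t ω = j (u t)) ∧
      ∫⁻ t in Set.Ioo (0:ℝ) T, ENNReal.ofReal (‖u t‖ ^ 2) < ⊤)
    (hMarkov : ∀ x : H, ∀ t₁ : ℝ, 0 ≤ t₁ → ∀ A : (ℝ → H) → Prop,
      (∀ y : E, ∀ᵐ ω ∂P, A fun t => X (j y) t ω) →
      (∀ᵐ ω ∂P, X x t₁ ω ∈ Set.range j → A fun t => X x (t₁ + t) ω)) :
    ∀ x : H, ∀ t₀ T : ℝ, 0 < t₀ → t₀ < T →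
      ∀ᵐ ω ∂P, ∃ u : ℝ → E, ContinuousOn u (Set.Icc t₀ T) ∧
        ∀ t ∈ Set.Icc t₀ T, X x t ω = j (u t) := by
  intro x t₀ T ht₀ _
  obtain ⟨t₁, ⟨ht₁pos, ht₁t₀⟩, hrange⟩ :=
    exists_mem_Ioo_ae_of_ae_ae (hjointmeas x hrangemeas) ht₀ <| by
      filter_upwards [hL2 x t₀ ht₀] with ω ⟨u, hu, _⟩
      filter_upwards [hu] with t ht
      exact ⟨u t, ht.symm⟩
  have hrestart := hMarkov x t₁ ht₁pos.le (LiftsContinuouslyOn j (Ici 0)) hreg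
  filter_upwards [hrestart, hrange] with ω hω hωt₁
  exact (hω hωt₁).of_comp_const_add.mono fun t ht => ht₁t₀.le.trans ht.1

/-- Markov gluing for path regularity: let `X^x` be a (jointly measurable)
Markov family of `H`-valued processes with a.s. continuous paths, pathwise
unique, such that for initial data in `E = D(A^γ)` (embedded in `H` by `j`)
the paths a.s. lie in `C([0,∞); D(A^γ))` (hreg). The Markov/uniqueness
restart property is encoded by `hMarkov`: any a.s. property of solutions
started from points of `E` holds a.s. for the time-`t₁`-shifted path whenever
`X^x_{t₁} ∈ D(A^γ)`. If for `x ∈ H` the path lies a.s. in `L²(0,T;D(A^γ))` for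
all `T` (hL2), then for every `0 < t₀ < T` the path a.s. lies in
`C([t₀,T]; D(A^γ))`. -/
theorem stmt19 {H E Ω : Type*} [NormedAddCommGroup H] [NormedSpace ℝ H]
    [MeasurableSpace H] [BorelSpace H]
    [NormedAddCommGroup E] [NormedSpace ℝ E]
    [MeasurableSpace Ω]
    (P : Measure Ω) [IsProbabilityMeasure P]
    (j : E →L[ℝ] H) (hinj : Function.Injective j)
    (hrangemeas : MeasurableSet (Set.range j))
    (X : H → ℝ → Ω → H)
    (hjointmeas : ∀ x : H, Measurable fun p : ℝ × Ω => X x p.1 p.2)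
    (hcont : ∀ x : H, ∀ᵐ ω ∂P, Continuous fun t => X x t ω)
    (hreg : ∀ y : E, ∀ᵐ ω ∂P, ∃ u : ℝ → E,
      ContinuousOn u (Set.Ici 0) ∧ ∀ t : ℝ, 0 ≤ t → X (j y) t ω = j (u t))
    (hL2 : ∀ x : H, ∀ T : ℝ, 0 < T → ∀ᵐ ω ∂P, ∃ u : ℝ → E,
      (∀ᵐ t ∂(volume.restrict (Set.Ioo (0:ℝ) T)), X x t ω = j (u t)) ∧
      ∫⁻ t in Set.Ioo (0:ℝ) T, ENNReal.ofReal (‖u t‖ ^ 2) < ⊤)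
    (hMarkov : ∀ x : H, ∀ t₁ : ℝ, 0 ≤ t₁ → ∀ A : (ℝ → H) → Prop,
      (∀ y : E, ∀ᵐ ω ∂P, A fun t => X (j y) t ω) →
      (∀ᵐ ω ∂P, X x t₁ ω ∈ Set.range j → A fun t => X x (t₁ + t) ω)) :
    ∀ x : H, ∀ t₀ T : ℝ, 0 < t₀ → t₀ < T →
      ∀ᵐ ω ∂P, ∃ u : ℝ → E, ContinuousOn u (Set.Icc t₀ T) ∧
        ∀ t ∈ Set.Icc t₀ T, X x t ω = j (u t) :=
  stmt19_general P j hrangemeas X hjointmeas hreg hL2 hMarkov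
end
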